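/- For all real numbers d > 0 and c ≥ 0, the integral ∫₀^∞ y^{-5/2} · exp(-1/(4d²·y) - c²·y/2) dy equals Γ(3/2) · (2d)³ · (1 + c/(√2·d)) · exp(-c/(√2·d)). -/

import Mathlib

open Real MeasureTheory Set Filter Topology

-- substitution x ↦ k / x on Ioi 0
lemma integral_inv_comp {k : ℝ} (hk : 0 < k) (g : ℝ → ℝ) :
    ∫ x in Ioi (0:ℝ), g x = ∫ x in Ioi (0:ℝ), (k / x ^ 2) * g (k / x) := by
  have himg : (fun x : ℝ => k / x) '' Ioi 0 = Ioi 0 := by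
    ext y
    constructor
    · rintro ⟨x, hx, rfl⟩
      exact div_pos hk hx
    · intro hy
      exact ⟨k / y, div_pos hk hy, by field_simp⟩
  have hderiv : ∀ x ∈ Ioi (0:ℝ), HasDerivWithinAt (fun x : ℝ => k / x) (-(k / x ^ 2)) (Ioi 0) x := by
    intro x hx
    have : HasDerivAt (fun x : ℝ => k / x) (-(k / x ^ 2)) x := by
      simpa [div_eq_mul_inv, mul_comm, sq] using ((hasDerivAt_inv (ne_of_gt hx)).const_mul k)
    exact this.hasDerivWithinAt
  have hinj : InjOn (fun x : ℝ => k / x) (Ioi 0) := by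
    intro x hx y hy h
    have hx' : (x:ℝ) ≠ 0 := ne_of_gt hx
    have hy' : (y:ℝ) ≠ 0 := ne_of_gt hy
    simp only at h
    field_simp at h
    exact h.symm
  have := integral_image_eq_integral_abs_deriv_smul measurableSet_Ioi hderiv hinj g
  rw [himg] at this
  rw [this]
  refine setIntegral_congr_fun measurableSet_Ioi fun x hx => ?_
  have hx0 : (0:ℝ) < x := hx
  have : 0 < k / x ^ 2 := div_pos hk (by positivity)
  rw [abs_neg, abs_of_pos this, smul_eq_mul]

lemma integrableOn_inv_comp {k : ℝ} (hk : 0 < k) (g : ℝ → ℝ) :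
    IntegrableOn g (Ioi (0:ℝ)) ↔
      IntegrableOn (fun x => (k / x ^ 2) * g (k / x)) (Ioi (0:ℝ)) := by
  have himg : (fun x : ℝ => k / x) '' Ioi 0 = Ioi 0 := by
    ext y
    constructor
    · rintro ⟨x, hx, rfl⟩
      exact div_pos hk hx
    · intro hy
      exact ⟨k / y, div_pos hk hy, by field_simp⟩
  have hderiv : ∀ x ∈ Ioi (0:ℝ), HasDerivWithinAt (fun x : ℝ => k / x) (-(k / x ^ 2)) (Ioi 0) x := by
    intro x hx
    have : HasDerivAt (fun x : ℝ => k / x) (-(k / x ^ 2)) x := by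
      simpa [div_eq_mul_inv, mul_comm, sq] using ((hasDerivAt_inv (ne_of_gt hx)).const_mul k)
    exact this.hasDerivWithinAt
  have hinj : InjOn (fun x : ℝ => k / x) (Ioi 0) := by
    intro x hx y hy h
    have hx' : (x:ℝ) ≠ 0 := ne_of_gt hx
    have hy' : (y:ℝ) ≠ 0 := ne_of_gt hy
    simp only at h
    field_simp at h
    exact h.symm
  have h := integrableOn_image_iff_integrableOn_abs_deriv_smul measurableSet_Ioi hderiv hinj g
  rw [himg] at h
  rw [h]
  constructor
  · intro hI
    refine hI.congr_fun (fun x hx => ?_) measurableSet_Ioi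
    have hx0 : (0:ℝ) < x := hx
    have : 0 < k / x ^ 2 := div_pos hk (by positivity)
    beta_reduce
    rw [abs_neg, abs_of_pos this, smul_eq_mul]
  · intro hI
    refine hI.congr_fun (fun x hx => ?_) measurableSet_Ioi
    have hx0 : (0:ℝ) < x := hx
    have : 0 < k / x ^ 2 := div_pos hk (by positivity)
    rw [abs_neg, abs_of_pos this, smul_eq_mul]

lemma int_e {a b : ℝ} (ha : 0 < a) (hb : 0 ≤ b) :
    IntegrableOn (fun x : ℝ => Real.exp (-(a * x ^ 2 + b / x ^ 2))) (Ioi 0) := by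
  refine Integrable.integrableOn ?_
  refine Integrable.mono' (integrable_exp_neg_mul_sq ha) ?_ (ae_of_all _ fun x => ?_)
  · apply Measurable.aestronglyMeasurable
    fun_prop
  · rw [Real.norm_eq_abs, abs_of_pos (Real.exp_pos _)]
    apply Real.exp_le_exp.mpr
    have h1 : 0 ≤ b / x ^ 2 := by positivity
    nlinarith

lemma int_x2e {a b : ℝ} (ha : 0 < a) (hb : 0 ≤ b) :
    IntegrableOn (fun x : ℝ => x ^ 2 * Real.exp (-(a * x ^ 2 + b / x ^ 2))) (Ioi 0) := by
  have hint := (integrable_rpow_mul_exp_neg_mul_sq ha (by norm_num : (-1:ℝ) < 2)).integrableOn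
    (s := Ioi 0)
  refine Integrable.mono' hint ?_ ?_
  · apply Measurable.aestronglyMeasurable
    fun_prop
  · rw [ae_restrict_iff' measurableSet_Ioi]
    refine ae_of_all _ fun x hx => ?_
    have hx0 : (0:ℝ) < x := hx
    rw [Real.norm_eq_abs, abs_of_nonneg (by positivity), Real.rpow_two]
    have h1 : 0 ≤ b / x ^ 2 := by positivity
    have h2 : Real.exp (-(a * x ^ 2 + b / x ^ 2)) ≤ Real.exp (-a * x ^ 2) := by
      apply Real.exp_le_exp.mpr; nlinarith
    nlinarith [Real.exp_pos (-(a * x ^ 2 + b / x ^ 2)), sq_nonneg x]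

lemma sym_identity {a b k : ℝ} (ha : 0 < a) (hb : 0 < b) (hk : k = Real.sqrt (b / a))
    {x : ℝ} (hx : 0 < x) :
    a * (k / x) ^ 2 + b / (k / x) ^ 2 = a * x ^ 2 + b / x ^ 2 := by
  have hk0 : 0 < k := hk ▸ Real.sqrt_pos.mpr (div_pos hb ha)
  have hk2 : k ^ 2 = b / a := by rw [hk]; exact Real.sq_sqrt (div_pos hb ha).le
  have hb' : b = a * k ^ 2 := by rw [hk2]; field_simp
  rw [hb']
  field_simp
  ring

lemma int_inve {a b : ℝ} (ha : 0 < a) (hb : 0 < b) :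
    IntegrableOn (fun x : ℝ => (1 / x ^ 2) * Real.exp (-(a * x ^ 2 + b / x ^ 2))) (Ioi 0) := by
  set k := Real.sqrt (b / a) with hk
  have hk0 : 0 < k := Real.sqrt_pos.mpr (div_pos hb ha)
  rw [integrableOn_inv_comp hk0]
  refine IntegrableOn.congr_fun ((int_e ha hb.le).const_mul (1 / k)) (fun x hx => ?_) measurableSet_Ioi
  have hx0 : (0:ℝ) < x := hx
  rw [sym_identity ha hb hk hx0]
  field_simp

lemma glasser {a b : ℝ} (ha : 0 < a) (hb : 0 < b) :
    ∫ x in Ioi (0:ℝ), Real.exp (-(a * x ^ 2 + b / x ^ 2)) =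
      Real.sqrt (π / a) * Real.exp (-(2 * Real.sqrt (a * b))) / 2 := by
  set k := Real.sqrt (b / a) with hk_def
  have hk : 0 < k := Real.sqrt_pos.mpr (div_pos hb ha)
  have hk2 : k ^ 2 = b / a := Real.sq_sqrt (div_pos hb ha).le
  have hak : a * k = Real.sqrt (a * b) := by
    rw [hk_def, ← Real.sqrt_sq ha.le, ← Real.sqrt_mul (by positivity)]
    congr 1
    field_simp
    ring
    rw [Real.sq_sqrt (by positivity)]
  have hb' : a * k ^ 2 = b := by rw [hk2]; field_simp
  have key : ∀ x : ℝ, 0 < x →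
      a * (x - k / x) ^ 2 + 2 * Real.sqrt (a * b) = a * x ^ 2 + b / x ^ 2 := by
    intro x hx
    have hx' : x ≠ 0 := ne_of_gt hx
    rw [← hak, ← hb']
    field_simp
    ring
  set φ : ℝ → ℝ := fun x => x - k / x with hφ
  have hφderiv : ∀ x ∈ Ioi (0:ℝ), HasDerivWithinAt φ (1 + k / x ^ 2) (Ioi 0) x := by
    intro x hx
    have h1 : HasDerivAt (fun x : ℝ => k / x) (-(k / x ^ 2)) x := by
      simpa [div_eq_mul_inv, mul_comm, sq] using ((hasDerivAt_inv (ne_of_gt (mem_Ioi.mp hx))).const_mul k)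
    have h2 := (hasDerivAt_id x).sub h1
    have : HasDerivAt φ (1 + k / x ^ 2) x := by
      exact h2.congr_deriv (by ring)
    exact this.hasDerivWithinAt
  have hφinj : InjOn φ (Ioi 0) := by
    have hmono : StrictMonoOn φ (Ioi 0) := by
      intro x hx y hy hxy
      have h1 : k / y < k / x := div_lt_div_of_pos_left hk (mem_Ioi.mp hx) hxy
      simp only [hφ]
      linarith
    exact hmono.injOn
  have hφimg : φ '' Ioi 0 = univ := by
    refine eq_univ_of_forall fun u => ?_
    have hs : (0:ℝ) ≤ u ^ 2 + 4 * k := by positivity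
    set s := Real.sqrt (u ^ 2 + 4 * k) with hs_def
    have hs2 : s ^ 2 = u ^ 2 + 4 * k := Real.sq_sqrt hs
    have hs0 : 0 ≤ s := Real.sqrt_nonneg _
    have hsu : -u < s := by nlinarith [sq_nonneg (s + u)]
    have hpos : (0:ℝ) < (u + s) / 2 := by linarith
    refine ⟨(u + s) / 2, hpos, ?_⟩
    show (u + s) / 2 - k / ((u + s) / 2) = u
    have h0 : u + s ≠ 0 := by intro h; rw [h] at hpos; simp at hpos
    field_simp
    linear_combination hs2
  have himage := integral_image_eq_integral_abs_deriv_smul measurableSet_Ioi hφderiv hφinj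
      (fun u => Real.exp (-(a * u ^ 2 + 2 * Real.sqrt (a * b))))
  rw [hφimg] at himage
  have hgauss : ∫ x in (univ : Set ℝ), Real.exp (-(a * x ^ 2 + 2 * Real.sqrt (a * b)))
      = Real.sqrt (π / a) * Real.exp (-(2 * Real.sqrt (a * b))) := by
    rw [Measure.restrict_univ]
    simp_rw [neg_add, Real.exp_add, ← neg_mul]
    rw [integral_mul_const, integral_gaussian]
  have hcong : (∫ x in Ioi (0:ℝ), |1 + k / x ^ 2| •
        Real.exp (-(a * (φ x) ^ 2 + 2 * Real.sqrt (a * b))))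
      = ∫ x in Ioi (0:ℝ), (1 + k / x ^ 2) * Real.exp (-(a * x ^ 2 + b / x ^ 2)) := by
    refine setIntegral_congr_fun measurableSet_Ioi fun x hx => ?_
    have hx0 : (0:ℝ) < x := hx
    have habs : (0:ℝ) < 1 + k / x ^ 2 := by positivity
    rw [smul_eq_mul, abs_of_pos habs]
    congr 2
    rw [← key x hx0]
  have int1 := int_e ha hb.le
  have int3 : IntegrableOn (fun x : ℝ => (k / x ^ 2) * Real.exp (-(a * x ^ 2 + b / x ^ 2))) (Ioi 0) := by
    refine IntegrableOn.congr_fun ((int_inve ha hb).const_mul k) (fun x hx => ?_) measurableSet_Ioi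
    field_simp
  have hH : (∫ x in Ioi (0:ℝ), (k / x ^ 2) * Real.exp (-(a * x ^ 2 + b / x ^ 2)))
      = ∫ x in Ioi (0:ℝ), Real.exp (-(a * x ^ 2 + b / x ^ 2)) := by
    rw [integral_inv_comp hk (fun x => Real.exp (-(a * x ^ 2 + b / x ^ 2)))]
    refine setIntegral_congr_fun measurableSet_Ioi fun x hx => ?_
    have hx0 : (0:ℝ) < x := hx
    rw [sym_identity ha hb hk_def hx0]
  have hsplit : (∫ x in Ioi (0:ℝ), (1 + k / x ^ 2) * Real.exp (-(a * x ^ 2 + b / x ^ 2)))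
      = (∫ x in Ioi (0:ℝ), Real.exp (-(a * x ^ 2 + b / x ^ 2)))
        + ∫ x in Ioi (0:ℝ), (k / x ^ 2) * Real.exp (-(a * x ^ 2 + b / x ^ 2)) := by
    rw [← integral_add int1 int3]
    exact setIntegral_congr_fun measurableSet_Ioi fun x hx => by ring
  have hfinal : Real.sqrt (π / a) * Real.exp (-(2 * Real.sqrt (a * b)))
      = 2 * ∫ x in Ioi (0:ℝ), Real.exp (-(a * x ^ 2 + b / x ^ 2)) := by
    rw [← hgauss, himage, hcong, hsplit, hH]
    ring
  linarith

lemma glasser_inv {a b : ℝ} (ha : 0 < a) (hb : 0 < b) :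
    ∫ x in Ioi (0:ℝ), (1 / x ^ 2) * Real.exp (-(a * x ^ 2 + b / x ^ 2)) =
      Real.sqrt (π / b) * Real.exp (-(2 * Real.sqrt (a * b))) / 2 := by
  set k := Real.sqrt (b / a) with hk_def
  have hk : 0 < k := Real.sqrt_pos.mpr (div_pos hb ha)
  have hk2 : k ^ 2 = b / a := Real.sq_sqrt (div_pos hb ha).le
  have step : ∫ x in Ioi (0:ℝ), (1 / x ^ 2) * Real.exp (-(a * x ^ 2 + b / x ^ 2))
      = ∫ x in Ioi (0:ℝ), (1 / k) * Real.exp (-(a * x ^ 2 + b / x ^ 2)) := by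
    rw [integral_inv_comp hk (fun x => (1 / x ^ 2) * Real.exp (-(a * x ^ 2 + b / x ^ 2)))]
    refine setIntegral_congr_fun measurableSet_Ioi fun x hx => ?_
    have hx0 : (0:ℝ) < x := hx
    rw [sym_identity ha hb hk_def hx0]
    field_simp
  rw [step, integral_const_mul, glasser ha hb]
  have hinvk : 1 / k * Real.sqrt (π / a) = Real.sqrt (π / b) := by
    rw [hk_def, one_div, ← Real.sqrt_inv, ← Real.sqrt_mul (by positivity)]
    congr 1
    field_simp
  rw [← hinvk]
  ring

lemma glasser_sq {a b : ℝ} (ha : 0 < a) (hb : 0 < b) :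
    ∫ x in Ioi (0:ℝ), x ^ 2 * Real.exp (-(a * x ^ 2 + b / x ^ 2)) =
      Real.sqrt (π / a) * (1 + 2 * Real.sqrt (a * b)) * Real.exp (-(2 * Real.sqrt (a * b)))
        / (4 * a) := by
  set E : ℝ → ℝ := fun x => Real.exp (-(a * x ^ 2 + b / x ^ 2)) with hE
  set F : ℝ → ℝ := fun x => x * E x with hF
  set G : ℝ → ℝ := fun x => E x - 2 * a * (x ^ 2 * E x) + 2 * b * ((1 / x ^ 2) * E x) with hG
  have hderiv : ∀ x ∈ Ioi (0:ℝ), HasDerivAt F (G x) x := by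
    intro x hx
    have hx0 : (0:ℝ) < x := hx
    have hx' : x ≠ 0 := ne_of_gt hx0
    have h1 : HasDerivAt (fun x : ℝ => a * x ^ 2) (a * (↑2 * x ^ 1)) x :=
      (hasDerivAt_pow 2 x).const_mul a
    have h2 : HasDerivAt (fun x : ℝ => b / x ^ 2) (b * (-(↑2 * x ^ 1) / (x ^ 2) ^ 2)) x := by
      simpa [div_eq_mul_inv] using
        (((hasDerivAt_pow 2 x).inv (pow_ne_zero 2 hx')).const_mul b)
    have hsum := ((h1.add h2).neg).exp
    have hFx := (hasDerivAt_id x).mul hsum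
    have : HasDerivAt F
        (1 * Real.exp (-(a * x ^ 2 + b / x ^ 2)) +
          x * (Real.exp (-(a * x ^ 2 + b / x ^ 2)) *
            (-(a * (↑2 * x ^ 1) + b * (-(↑2 * x ^ 1) / (x ^ 2) ^ 2))))) x := hFx
    convert this using 1
    simp only [hG, hE]
    field_simp
    ring
  have htop : Tendsto F atTop (𝓝 0) := by
    have hbound := rpow_mul_exp_neg_mul_sq_isLittleO_exp_neg ha 1
    have hlim : Tendsto (fun x : ℝ => Real.exp (-(1/2) * x)) atTop (𝓝 0) := by
      have h1 : Tendsto (fun x : ℝ => (1/2 : ℝ) * x) atTop atTop :=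
        tendsto_id.const_mul_atTop (by norm_num)
      have := Real.tendsto_exp_neg_atTop_nhds_zero.comp h1
      refine this.congr fun x => ?_
      simp [Function.comp, neg_mul]
    have h0 : Tendsto (fun x : ℝ => x * Real.exp (-a * x ^ 2)) atTop (𝓝 0) := by
      have h := hbound.isBigO.trans_tendsto hlim
      refine h.congr' ?_
      filter_upwards [eventually_ge_atTop (0:ℝ)] with x hx
      rw [Real.rpow_one]
    refine squeeze_zero' ?_ ?_ h0
    · filter_upwards [eventually_ge_atTop (0:ℝ)] with x hx
      exact mul_nonneg hx (Real.exp_pos _).le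
    · filter_upwards [eventually_gt_atTop (0:ℝ)] with x hx
      have h1 : Real.exp (-(a * x ^ 2 + b / x ^ 2)) ≤ Real.exp (-a * x ^ 2) := by
        apply Real.exp_le_exp.mpr
        have : 0 ≤ b / x ^ 2 := by positivity
        linarith
      exact mul_le_mul_of_nonneg_left h1 hx.le
  have hcont : ContinuousWithinAt F (Ici 0) 0 := by
    have hF0 : F 0 = 0 := by simp [hF]
    unfold ContinuousWithinAt
    rw [hF0]
    refine squeeze_zero' (g := fun x => x) ?_ ?_ ?_
    · filter_upwards [self_mem_nhdsWithin] with x (hx : x ∈ Ici 0)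
      exact mul_nonneg hx (Real.exp_pos _).le
    · filter_upwards [self_mem_nhdsWithin] with x (hx : x ∈ Ici 0)
      have h1 : E x ≤ 1 := by
        rw [hE]
        apply Real.exp_le_one_iff.mpr
        have h2 : 0 ≤ a * x ^ 2 := by positivity
        have h3 : 0 ≤ b / x ^ 2 := by positivity
        linarith
      simpa [hF] using mul_le_of_le_one_right (hx : (0:ℝ) ≤ x) h1
    · exact (continuous_id.tendsto 0).mono_left nhdsWithin_le_nhds
  have hGint : IntegrableOn G (Ioi (0:ℝ)) := by
    exact ((int_e ha hb.le).sub ((int_x2e ha hb.le).const_mul (2 * a))).add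
      ((int_inve ha hb).const_mul (2 * b))
  have h0 : ∫ x in Ioi (0:ℝ), G x = 0 - F 0 :=
    integral_Ioi_of_hasDerivAt_of_tendsto hcont hderiv hGint htop
  have hF0 : F 0 = 0 := by simp [hF]
  rw [hF0, sub_zero] at h0
  have hsplit : ∫ x in Ioi (0:ℝ), G x
      = (∫ x in Ioi (0:ℝ), E x) - 2 * a * (∫ x in Ioi (0:ℝ), x ^ 2 * E x)
        + 2 * b * ∫ x in Ioi (0:ℝ), (1 / x ^ 2) * E x := by
    have i1 : IntegrableOn (fun x : ℝ => E x - 2 * a * (x ^ 2 * E x)) (Ioi 0) :=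
      (int_e ha hb.le).sub ((int_x2e ha hb.le).const_mul (2 * a))
    have i2 : IntegrableOn (fun x : ℝ => 2 * b * ((1 / x ^ 2) * E x)) (Ioi 0) :=
      (int_inve ha hb).const_mul (2 * b)
    rw [hG, integral_add i1 i2,
      integral_sub (int_e ha hb.le) ((int_x2e ha hb.le).const_mul (2 * a)),
      integral_const_mul, integral_const_mul]
  rw [hsplit] at h0
  simp only [hE] at h0
  rw [glasser ha hb, glasser_inv ha hb] at h0
  have e1 : b * Real.sqrt (π / b) = Real.sqrt (π / a) * Real.sqrt (a * b) := by
    rw [← Real.sqrt_sq hb.le, ← Real.sqrt_mul (by positivity), ← Real.sqrt_mul (by positivity)]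
    congr 1
    field_simp
    ring
    rw [Real.sq_sqrt (by positivity)]
  rw [eq_div_iff (ne_of_gt (by positivity : (0:ℝ) < 4 * a))]
  linear_combination (-2 : ℝ) * h0 + 2 * Real.exp (-(2 * Real.sqrt (a * b))) * e1

theorem stmt_2 (d c : ℝ) (hd : 0 < d) (hc : 0 ≤ c) :
    ∫ y in Set.Ioi (0 : ℝ),
        y ^ (-(5 : ℝ) / 2) * Real.exp (-1 / (4 * d ^ 2 * y) - c ^ 2 * y / 2) =
      Real.Gamma (3 / 2) * (2 * d) ^ 3 * (1 + c / (Real.sqrt 2 * d)) *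
        Real.exp (-c / (Real.sqrt 2 * d)) := by
  have hd' : d ≠ 0 := ne_of_gt hd
  set A : ℝ := 1 / (4 * d ^ 2) with hA
  set B : ℝ := c ^ 2 / 2 with hB
  have hA0 : 0 < A := by positivity
  have hGamma : Real.Gamma (3 / 2) = Real.sqrt π / 2 := by
    rw [show (3 / 2 : ℝ) = 1 / 2 + 1 by norm_num, Real.Gamma_add_one (by norm_num),
      Real.Gamma_one_half_eq]
    ring
  have hsub : (∫ y in Ioi (0 : ℝ),
        y ^ (-(5 : ℝ) / 2) * Real.exp (-1 / (4 * d ^ 2 * y) - c ^ 2 * y / 2))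
      = 2 * ∫ x in Ioi (0 : ℝ), x ^ 2 * Real.exp (-(A * x ^ 2 + B / x ^ 2)) := by
    rw [← integral_comp_rpow_Ioi
      (fun y => y ^ (-(5 : ℝ) / 2) * Real.exp (-1 / (4 * d ^ 2 * y) - c ^ 2 * y / 2))
      (p := -2) (by norm_num), ← integral_const_mul]
    refine setIntegral_congr_fun measurableSet_Ioi fun x hx => ?_
    have hx0 : (0 : ℝ) < x := hx
    have hx' : x ≠ 0 := ne_of_gt hx0
    have h2 : x ^ (-2 : ℝ) = (x ^ 2)⁻¹ := by
      rw [show (-2 : ℝ) = ((-2 : ℤ) : ℝ) by norm_num, Real.rpow_intCast]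
      simp [zpow_neg]
    have h3 : x ^ ((-2 : ℝ) - 1) = (x ^ 3)⁻¹ := by
      rw [show (-2 : ℝ) - 1 = ((-3 : ℤ) : ℝ) by norm_num, Real.rpow_intCast]
      simp [zpow_neg]
    have h5 : (x ^ (-2 : ℝ)) ^ (-(5 : ℝ) / 2) = x ^ 5 := by
      rw [← Real.rpow_mul hx0.le]
      norm_num
    rw [smul_eq_mul, h5, h2, h3]
    have hexp : -1 / (4 * d ^ 2 * (x ^ 2)⁻¹) - c ^ 2 * (x ^ 2)⁻¹ / 2
        = -(A * x ^ 2 + B / x ^ 2) := by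
      rw [hA, hB]
      field_simp
      ring
    rw [hexp]
    have habs : |(-2 : ℝ)| = 2 := by norm_num
    rw [habs]
    field_simp
  rw [hsub]
  rcases eq_or_lt_of_le hc with hc0 | hc0
  · -- c = 0
    subst hc0
    have hB0 : B = 0 := by rw [hB]; norm_num
    have key : ∫ x in Ioi (0:ℝ), x ^ 2 * Real.exp (-(A * x ^ 2 + B / x ^ 2))
        = ∫ x in Ioi (0:ℝ), x ^ (2:ℝ) * Real.exp (-A * x ^ (2:ℝ)) := by
      refine setIntegral_congr_fun measurableSet_Ioi fun x hx => ?_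
      rw [hB0]
      simp [Real.rpow_two, zero_div, add_zero, neg_mul]
    rw [key, integral_rpow_mul_exp_neg_mul_rpow two_pos (by norm_num) hA0]
    have hA' : A ^ (-(2 + 1) / 2 : ℝ) = (2 * d) ^ 3 := by
      have hA2 : A = (2 * d) ^ (-2 : ℝ) := by
        rw [hA, Real.rpow_neg (by positivity : (0:ℝ) ≤ 2 * d), Real.rpow_two]
        field_simp
        ring
      rw [hA2, ← Real.rpow_mul (by positivity : (0:ℝ) ≤ 2 * d)]
      norm_num
    rw [hA', show ((2:ℝ) + 1) / 2 = 3 / 2 by norm_num]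
    simp
    ring
  · -- 0 < c
    have hB0 : 0 < B := by positivity
    rw [glasser_sq hA0 hB0]
    have hsA : Real.sqrt (π / A) = 2 * d * Real.sqrt π := by
      rw [show π / A = (2 * d) ^ 2 * π by rw [hA]; field_simp; ring,
        Real.sqrt_mul (by positivity), Real.sqrt_sq (by positivity)]
    have hs2 : Real.sqrt 2 ^ 2 = 2 := Real.sq_sqrt (by norm_num)
    have hs2' : Real.sqrt 2 ≠ 0 := by positivity
    have hsAB : 2 * Real.sqrt (A * B) = c / (Real.sqrt 2 * d) := by
      have harg : A * B = (c / (Real.sqrt 2 * d) / 2) ^ 2 := by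
        rw [hA, hB]
        field_simp
        linear_combination 2 * hs2
      rw [harg, Real.sqrt_sq (by positivity)]
      ring
    rw [hsAB, hsA, hGamma]
    rw [show -(c / (Real.sqrt 2 * d)) = -c / (Real.sqrt 2 * d) by ring]
    rw [hA, show (4:ℝ) * (1 / (4 * d ^ 2)) = (d ^ 2)⁻¹ by field_simp,
      div_eq_mul_inv, inv_inv]
    ring
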